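/- Let E be a real inner product space and F : E → ℝ be differentiable with gradient ∇F that is L-Lipschitz, and suppose F is bounded below by F*. Let η > 0, let w : ℕ → E, Δ : ℕ → E, e : ℕ → E satisfy w(r+1) = w(r) + η·Δ(r) and Δ(r) = −(∇F(w(r)) + e(r)) for all r, and let ε : ℕ → ℝ satisfy ‖e(r)‖ ≤ ε(r). Then for every R ≥ 1, (1/R)·Σ_{r=0}^{R−1} ‖∇F(w(r))‖² ≤ (F(w(0)) − F*)/(η·R) + (L·η/(2R))·Σ_{r=0}^{R−1} ‖Δ(r)‖² + (1/R)·Σ_{r=0}^{R−1} ‖∇F(w(r))‖·ε(r). (This is the telescoped averaged-gradient bound, Eq. (13), in the deterministic form with exact per-round coefficients.) -/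

import Mathlib

/-!
Along the segment `t ↦ x + t • v`, `L`-Lipschitzness of the gradient bounds the derivative of
`F (x + t • v) - t ⟪∇F x, v⟫` by `L t ‖v‖²`, which integrates to the descent lemma
`F (x + v) ≤ F x + ⟪∇F x, v⟫ + (L / 2) ‖v‖²`. With `v = η Δ r` and `Δ r = -(∇F (w r) + e r)`,
Cauchy–Schwarz turns this into a per-round decrease of `F` by `η ‖∇F (w r)‖²` up to the terms
`(L η² / 2) ‖Δ r‖² + η ‖∇F (w r)‖ ε r`. Summing over `r < R` telescopes, `F (w R) ≥ F*` bounds the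
left end, and dividing by `η R` gives the claim.
-/

open RealInnerProductSpace

section Descent

variable {E : Type*} [NormedAddCommGroup E] [InnerProductSpace ℝ E] [CompleteSpace E]

theorem HasGradientAt.hasDerivAt_comp_add_smul {f : E → ℝ} {f' x v : E} {t : ℝ}
    (h : HasGradientAt f f' (x + t • v)) :
    HasDerivAt (fun s : ℝ => f (x + s • v)) ⟪f', v⟫ t := by
  have hline : HasDerivAt (fun s : ℝ => x + s • v) v t := by
    simpa using ((hasDerivAt_id t).smul_const v).const_add x
  have hcomp := (hasGradientAt_iff_hasFDerivAt.mp h).comp_hasDerivAt t hline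
  simp only [Function.comp_def, InnerProductSpace.toDual_apply_apply] at hcomp
  exact hcomp

theorem apply_add_le_of_lipschitz_gradient {F : E → ℝ} {F' : E → E} {L : ℝ}
    (hgrad : ∀ x, HasGradientAt F (F' x) x) (hlip : ∀ x y, ‖F' x - F' y‖ ≤ L * ‖x - y‖)
    (x v : E) :
    F (x + v) ≤ F x + ⟪F' x, v⟫ + L / 2 * ‖v‖ ^ 2 := by
  set φ : ℝ → ℝ := fun t => F (x + t • v) - t * ⟪F' x, v⟫ - L * ‖v‖ ^ 2 * t ^ 2 / 2
  have hφ' : ∀ t, HasDerivAt φ (⟪F' (x + t • v) - F' x, v⟫ - L * ‖v‖ ^ 2 * t) t := by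
    intro t
    have hquad : HasDerivAt (fun t : ℝ => L * ‖v‖ ^ 2 * t ^ 2 / 2) (L * ‖v‖ ^ 2 * t) t := by
      simpa using (((hasDerivAt_pow 2 t).const_mul (L * ‖v‖ ^ 2)).div_const 2).congr_deriv
        (by ring)
    exact ((((hgrad _).hasDerivAt_comp_add_smul).sub
      ((hasDerivAt_id t).mul_const ⟪F' x, v⟫)).sub hquad).congr_deriv
      (by rw [inner_sub_left]; simp)
  have hslope : ∀ t, 0 < t → ⟪F' (x + t • v) - F' x, v⟫ ≤ L * ‖v‖ ^ 2 * t := fun t ht =>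
    calc ⟪F' (x + t • v) - F' x, v⟫ ≤ ‖F' (x + t • v) - F' x‖ * ‖v‖ := real_inner_le_norm _ _
      _ ≤ L * ‖(x + t • v) - x‖ * ‖v‖ := by gcongr; exact hlip _ _
      _ = L * ‖v‖ ^ 2 * t := by
        rw [add_sub_cancel_left, norm_smul, Real.norm_of_nonneg ht.le]; ring
  have hanti : AntitoneOn φ (Set.Ici 0) := by
    refine antitoneOn_of_deriv_nonpos (convex_Ici 0)
      (fun t _ => (hφ' t).continuousAt.continuousWithinAt)
      (fun t _ => (hφ' t).differentiableAt.differentiableWithinAt) fun t ht => ?_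
    rw [interior_Ici] at ht
    rw [(hφ' t).deriv]
    linarith [hslope t ht]
  have hφ01 : φ 1 ≤ φ 0 := hanti Set.self_mem_Ici (Set.mem_Ici.mpr zero_le_one) zero_le_one
  norm_num [φ] at hφ01
  linarith

theorem apply_add_smul_neg_le_of_lipschitz_gradient {F : E → ℝ} {F' : E → E} {L : ℝ}
    (hgrad : ∀ x, HasGradientAt F (F' x) x) (hlip : ∀ x y, ‖F' x - F' y‖ ≤ L * ‖x - y‖)
    {η ε : ℝ} (hη : 0 ≤ η) (x : E) {e : E} (he : ‖e‖ ≤ ε) :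
    F (x + η • -(F' x + e)) ≤
      F x - η * ‖F' x‖ ^ 2 + L * η ^ 2 / 2 * ‖-(F' x + e)‖ ^ 2 + η * (‖F' x‖ * ε) := by
  have hinner : ⟪F' x, η • -(F' x + e)⟫ = -η * ‖F' x‖ ^ 2 - η * ⟪F' x, e⟫ := by
    rw [real_inner_smul_right, inner_neg_right, inner_add_right, real_inner_self_eq_norm_sq]
    ring
  have hcs : -⟪F' x, e⟫ ≤ ‖F' x‖ * ε :=
    calc -⟪F' x, e⟫ ≤ ‖F' x‖ * ‖e‖ := by simpa using real_inner_le_norm (F' x) (-e)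
      _ ≤ ‖F' x‖ * ε := by gcongr
  have hdescent := apply_add_le_of_lipschitz_gradient hgrad hlip x (η • -(F' x + e))
  rw [hinner, norm_smul, mul_pow, Real.norm_eq_abs, sq_abs] at hdescent
  linarith [mul_le_mul_of_nonneg_left hcs hη]

end Descent

theorem sum_range_le_sub_add_of_le_sub_add {u a b : ℕ → ℝ} {m : ℝ}
    (hstep : ∀ r, u (r + 1) ≤ u r - a r + b r) (hlow : ∀ r, m ≤ u r) (R : ℕ) :
    ∑ r ∈ Finset.range R, a r ≤ u 0 - m + ∑ r ∈ Finset.range R, b r := by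
  have htele : ∑ r ∈ Finset.range R, (a r - b r) ≤ u 0 - u R := by
    rw [← Finset.sum_range_sub']
    exact Finset.sum_le_sum fun r _ => by linarith [hstep r]
  rw [Finset.sum_sub_distrib] at htele
  linarith [hlow R]

theorem telescoped_averaged_gradient_bound_general
    {E : Type*} [NormedAddCommGroup E] [InnerProductSpace ℝ E] [CompleteSpace E]
    (F : E → ℝ) (F' : E → E) (L : ℝ) (Fstar : ℝ)
    (hgrad : ∀ x, HasGradientAt F (F' x) x)
    (hlip : ∀ x y, ‖F' x - F' y‖ ≤ L * ‖x - y‖)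
    (hbdd : ∀ x, Fstar ≤ F x)
    (η : ℝ) (hη : 0 < η)
    (w Δ e : ℕ → E) (ε : ℕ → ℝ)
    (hupd : ∀ r, w (r + 1) = w r + η • Δ r)
    (hΔ : ∀ r, Δ r = -(F' (w r) + e r))
    (herr : ∀ r, ‖e r‖ ≤ ε r)
    (R : ℕ) :
    (1 / (R : ℝ)) * ∑ r ∈ Finset.range R, ‖F' (w r)‖ ^ 2 ≤
      (F (w 0) - Fstar) / (η * R)
        + (L * η / (2 * R)) * ∑ r ∈ Finset.range R, ‖Δ r‖ ^ 2
        + (1 / (R : ℝ)) * ∑ r ∈ Finset.range R, ‖F' (w r)‖ * ε r := by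
  have hstep : ∀ r, F (w (r + 1)) ≤ F (w r) - η * ‖F' (w r)‖ ^ 2
      + (L * η ^ 2 / 2 * ‖Δ r‖ ^ 2 + η * (‖F' (w r)‖ * ε r)) := fun r => by
    have hdescent := apply_add_smul_neg_le_of_lipschitz_gradient hgrad hlip hη.le (w r) (herr r)
    rw [← hΔ r, ← hupd r] at hdescent
    linarith
  have hsum := sum_range_le_sub_add_of_le_sub_add hstep (fun r => hbdd (w r)) R
  rw [Finset.sum_add_distrib, ← Finset.mul_sum, ← Finset.mul_sum, ← Finset.mul_sum] at hsum
  rcases R.eq_zero_or_pos with rfl | hR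
  · simp
  have hηR : 0 < η * R := mul_pos hη (Nat.cast_pos.mpr hR)
  calc (1 / (R : ℝ)) * ∑ r ∈ Finset.range R, ‖F' (w r)‖ ^ 2
      = (η * ∑ r ∈ Finset.range R, ‖F' (w r)‖ ^ 2) / (η * R) := by
        field_simp
    _ ≤ (F (w 0) - Fstar + (L * η ^ 2 / 2 * ∑ r ∈ Finset.range R, ‖Δ r‖ ^ 2
        + η * ∑ r ∈ Finset.range R, ‖F' (w r)‖ * ε r)) / (η * R) := by
        gcongr
    _ = (F (w 0) - Fstar) / (η * R)
        + (L * η / (2 * R)) * ∑ r ∈ Finset.range R, ‖Δ r‖ ^ 2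
        + (1 / (R : ℝ)) * ∑ r ∈ Finset.range R, ‖F' (w r)‖ * ε r := by
        field_simp
        ring

/-- **Telescoped averaged-gradient bound (Eq. (13), deterministic form)**:
for iterates `w (r+1) = w r + η • Δ r` with `Δ r = -(∇F (w r) + e r)` and `‖e r‖ ≤ ε r`,
the average of `‖∇F (w r)‖²` over `r < R` is bounded by
`(F (w 0) - F*)/(ηR) + (Lη/(2R)) Σ ‖Δ r‖² + (1/R) Σ ‖∇F (w r)‖ · ε r`. -/
theorem telescoped_averaged_gradient_bound
    {E : Type*} [NormedAddCommGroup E] [InnerProductSpace ℝ E] [CompleteSpace E]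
    (F : E → ℝ) (F' : E → E) (L : ℝ) (Fstar : ℝ)
    (hgrad : ∀ x, HasGradientAt F (F' x) x)
    (hlip : ∀ x y, ‖F' x - F' y‖ ≤ L * ‖x - y‖)
    (hbdd : ∀ x, Fstar ≤ F x)
    (η : ℝ) (hη : 0 < η)
    (w Δ e : ℕ → E) (ε : ℕ → ℝ)
    (hupd : ∀ r, w (r + 1) = w r + η • Δ r)
    (hΔ : ∀ r, Δ r = -(F' (w r) + e r))
    (herr : ∀ r, ‖e r‖ ≤ ε r)
    (R : ℕ) (hR : 1 ≤ R) :
    (1 / (R : ℝ)) * ∑ r ∈ Finset.range R, ‖F' (w r)‖ ^ 2 ≤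
      (F (w 0) - Fstar) / (η * R)
        + (L * η / (2 * R)) * ∑ r ∈ Finset.range R, ‖Δ r‖ ^ 2
        + (1 / (R : ℝ)) * ∑ r ∈ Finset.range R, ‖F' (w r)‖ * ε r :=
  telescoped_averaged_gradient_bound_general F F' L Fstar hgrad hlip hbdd η hη w Δ e ε hupd hΔ herr
    R
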